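/- Let P, Q be perfect-tree forcing notions and D ⊆ P, and suppose P ⊑_D Q (Q locks D over P). Then D is pre-dense in P ∪ Q, and if in addition P is regular, then D is pre-dense in P as well. -/

import Mathlib

noncomputable section

/-- Finite binary strings. -/
abbrev Str : Type := List Bool

/-- Points of Cantor space `2^ω`. -/
abbrev Pt : Type := ℕ → Bool

/-- The length-`n` initial segment of a point of Cantor space, as a string. -/
def seg (a : Pt) (n : ℕ) : Str := (List.range n).map a

/-- A tree: a set of strings closed under initial segments. -/
def IsTree (T : Set Str) : Prop := ∀ ⦃s t : Str⦄, s <+: t → t ∈ T → s ∈ T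

/-- A perfect tree: a nonempty tree in which every string has two
incomparable extensions inside the tree. -/
def IsPerfectTree (T : Set Str) : Prop :=
  T.Nonempty ∧ IsTree T ∧
    ∀ s ∈ T, ∃ t₁ t₂, t₁ ∈ T ∧ t₂ ∈ T ∧ s <+: t₁ ∧ s <+: t₂ ∧ ¬ t₁ <+: t₂ ∧ ¬ t₂ <+: t₁

/-- The restriction `T↾s = {t ∈ T : s ⊆ t or t ⊆ s}`. -/
def Tres (T : Set Str) (s : Str) : Set Str := {t ∈ T | s <+: t ∨ t <+: s}

/-- The set `[T]` of branches of a tree `T`. -/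
def branches (T : Set Str) : Set Pt := {a | ∀ n, seg a n ∈ T}

/-- `s` is the stem (root) of `T`: the longest `s ∈ T` with `T = T↾s`. -/
def IsStem (T : Set Str) (s : Str) : Prop :=
  s ∈ T ∧ T = Tres T s ∧ ∀ t ∈ T, T = Tres T t → t <+: s

open Classical in
/-- The stem `root(T)` of a tree (junk value `[]` if there is none). -/
def stem (T : Set Str) : Str := if h : ∃ s, IsStem T s then h.choose else []

/-- Simple splitting `T→i = T↾(root(T)⌢i)`. -/
def splitOne (T : Set Str) (i : Bool) : Set Str := Tres T (stem T ++ [i])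

/-- Iterated splitting `T→u`. -/
def splitIter (T : Set Str) (u : Str) : Set Str := u.foldl splitOne T

/-- Almost disjointness of trees: finite intersection. -/
def AD (S T : Set Str) : Prop := (S ∩ T).Finite

/-- A perfect-tree forcing notion: a nonempty set of perfect trees closed
under restrictions. -/
def IsPTF (P : Set (Set Str)) : Prop :=
  P.Nonempty ∧ (∀ T ∈ P, IsPerfectTree T) ∧ ∀ T ∈ P, ∀ s ∈ T, Tres T s ∈ P

/-- `A` is relatively clopen in `B` (as a subspace of Cantor space). -/
def ClopenIn (A B : Set Pt) : Prop := IsClopen ((fun x : B => (x : Pt)) ⁻¹' A)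

/-- `A` is relatively open in `B` (as a subspace of Cantor space). -/
def OpenIn (A B : Set Pt) : Prop := IsOpen ((fun x : B => (x : Pt)) ⁻¹' A)

/-- A special perfect-tree forcing notion: `P = {T↾s : s ∈ T ∈ A}` for an
antichain (pairwise a.d. set) `A ⊆ P`. -/
def SpecialPTF (P : Set (Set Str)) : Prop :=
  ∃ A ⊆ P, A.Pairwise AD ∧ P = {R | ∃ T ∈ A, ∃ s ∈ T, R = Tres T s}

/-- A regular perfect-tree forcing notion: `[S] ∩ [T]` is relatively clopen
in `[S]` or in `[T]`, for all `S, T ∈ P`. -/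
def RegularPTF (P : Set (Set Str)) : Prop :=
  ∀ S ∈ P, ∀ T ∈ P,
    ClopenIn (branches S ∩ branches T) (branches S) ∨
    ClopenIn (branches S ∩ branches T) (branches T)

/-- `T ⊆ᶠ ⋃ D`: `[T]` is covered by finitely many `[S]`, `S ∈ D`. -/
def SqFin (T : Set Str) (D : Set (Set Str)) : Prop :=
  ∃ D' ⊆ D, D'.Finite ∧ branches T ⊆ ⋃ S ∈ D', branches S

/-- `P ⊑ Q`: `Q` is a refinement of `P`. -/
def Refines (P Q : Set (Set Str)) : Prop :=
  (∀ T ∈ P, ∃ S ∈ Q, S ⊆ T) ∧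
  (∀ S ∈ Q, SqFin S P) ∧
  (∀ S ∈ Q, ∀ T ∈ P, ClopenIn (branches S ∩ branches T) (branches S) ∧ ¬ T ⊆ S)

/-- `D` is dense in `P`. -/
def DenseIn (D P : Set (Set Str)) : Prop := ∀ T ∈ P, ∃ S ∈ D, S ⊆ T

/-- `D` is pre-dense in `P`. -/
def PreDenseIn (D P : Set (Set Str)) : Prop :=
  DenseIn {T ∈ P | ∃ S ∈ D, T ⊆ S} P

/-- `P ⊑_D Q`: `Q` locks `D` over `P`. -/
def Locks (P D Q : Set (Set Str)) : Prop :=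
  Refines P Q ∧ ∀ S ∈ Q, SqFin S D

/-- A finite splitting system of height `n` over `P`. -/
def IsFSS (P : Set (Set Str)) (n : ℕ) (φ : Str → Set Str) : Prop :=
  (∀ s : Str, s.length ≤ n → φ s ∈ P) ∧
  ∀ (s : Str) (i : Bool), s.length < n → φ (s ++ [i]) ⊆ splitOne (φ s) i

/-! Every tree of `Q` is covered by finitely many trees of `D`, so it shares a branch with some
`S ∈ D`. Since `Q` meets `P ⊇ D` in relatively clopen sets, that common branch has a
neighbourhood in `[Q]` inside `[S]`, i.e. a restriction `Q↾s ⊆ S`; for perfect trees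
inclusion of branch sets is inclusion of trees. If `P` is regular, the same argument runs inside
`P` with any `T ∈ P` and a tree of `Q` below it: `[T] ∩ [S]` is clopen in `[T]` or in `[S]`,
giving `T↾s ⊆ S` or `S↾s ⊆ T`. -/

lemma seg_length (a : Pt) (n : ℕ) : (seg a n).length = n := by simp [seg]

lemma seg_succ (a : Pt) (n : ℕ) : seg a (n + 1) = seg a n ++ [a n] := by
  simp [seg, List.range_succ]

lemma seg_eq_seg_iff {a b : Pt} {n : ℕ} : seg a n = seg b n ↔ ∀ i < n, a i = b i := by
  simp [seg, List.map_inj_left]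

def greedyApprox (next : Str → Bool) : ℕ → Pt
  | 0 => fun _ => false
  | n + 1 => Function.update (greedyApprox next n) n (next (seg (greedyApprox next n) n))

def greedyBranch (next : Str → Bool) : Pt := fun k => greedyApprox next (k + 1) k

lemma greedyApprox_apply_of_lt (next : Str → Bool) {m n i : ℕ} (hmn : m ≤ n) (hi : i < m) :
    greedyApprox next n i = greedyApprox next m i := by
  induction n, hmn using Nat.le_induction with
  | base => rfl
  | succ n hmn ih =>
    rw [greedyApprox, Function.update_of_ne (by omega), ih]

lemma seg_greedyBranch (next : Str → Bool) (n : ℕ) :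
    seg (greedyBranch next) n = seg (greedyApprox next n) n :=
  seg_eq_seg_iff.2 fun i hi => (greedyApprox_apply_of_lt next hi (lt_add_one i)).symm

lemma seg_greedyApprox_succ (next : Str → Bool) (n : ℕ) :
    seg (greedyApprox next (n + 1)) (n + 1) =
      seg (greedyApprox next n) n ++ [next (seg (greedyApprox next n) n)] := by
  rw [seg_succ, seg_eq_seg_iff.2 fun i hi => greedyApprox_apply_of_lt next n.le_succ hi]
  simp [greedyApprox]

lemma greedyBranch_mem_branches {T : Set Str} {next : Str → Bool} (hnil : [] ∈ T)
    (hnext : ∀ t ∈ T, t ++ [next t] ∈ T) : greedyBranch next ∈ branches T := by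
  intro n
  rw [seg_greedyBranch]
  induction n with
  | zero => exact hnil
  | succ n ih => rw [seg_greedyApprox_succ]; exact hnext _ ih

lemma branches_nonempty_of_forall_exists_append {T : Set Str} (hnil : [] ∈ T)
    (hext : ∀ t ∈ T, ∃ i : Bool, t ++ [i] ∈ T) : (branches T).Nonempty := by
  choose! next hnext using hext
  exact ⟨greedyBranch next, greedyBranch_mem_branches hnil hnext⟩

lemma IsPerfectTree.nil_mem {T : Set Str} (hT : IsPerfectTree T) : [] ∈ T :=
  hT.2.1 List.nil_prefix hT.1.some_mem

lemma IsPerfectTree.exists_append_mem {T : Set Str} (hT : IsPerfectTree T) {s : Str}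
    (hs : s ∈ T) : ∃ i : Bool, s ++ [i] ∈ T := by
  obtain ⟨t₁, t₂, ht₁, -, ⟨r, rfl⟩, hst₂, hn₁, -⟩ := hT.2.2 s hs
  rcases r with _ | ⟨i, r⟩
  · rw [List.append_nil] at hn₁
    exact absurd hst₂ hn₁
  · exact ⟨i, hT.2.1 ⟨r, by simp⟩ ht₁⟩

lemma IsPerfectTree.branches_nonempty {T : Set Str} (hT : IsPerfectTree T) :
    (branches T).Nonempty :=
  branches_nonempty_of_forall_exists_append hT.nil_mem fun _ => hT.exists_append_mem

lemma branches_mono {S T : Set Str} (h : S ⊆ T) : branches S ⊆ branches T :=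
  fun _ ha n => h (ha n)

lemma tres_subset (T : Set Str) (s : Str) : Tres T s ⊆ T := fun _ ht => ht.1

lemma seg_eq_of_mem_branches_tres {T : Set Str} {s : Str} {a : Pt}
    (ha : a ∈ branches (Tres T s)) : seg a s.length = s := by
  rcases (ha s.length).2 with h | h
  · exact (h.eq_of_length (seg_length a _).symm).symm
  · exact h.eq_of_length (seg_length a _)

lemma IsPerfectTree.tres {T : Set Str} (hT : IsPerfectTree T) {s : Str} (hs : s ∈ T) :
    IsPerfectTree (Tres T s) := by
  refine ⟨⟨s, hs, Or.inl (List.prefix_refl s)⟩, fun u t hut ht => ⟨hT.2.1 hut ht.1, ?_⟩, ?_⟩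
  · rcases ht.2 with h | h
    · exact List.prefix_or_prefix_of_prefix h hut
    · exact Or.inr (hut.trans h)
  · rintro t ⟨htT, hst | hts⟩
    · obtain ⟨t₁, t₂, h₁, h₂, p₁, p₂, n₁, n₂⟩ := hT.2.2 t htT
      exact ⟨t₁, t₂, ⟨h₁, Or.inl (hst.trans p₁)⟩, ⟨h₂, Or.inl (hst.trans p₂)⟩, p₁, p₂, n₁, n₂⟩
    · obtain ⟨t₁, t₂, h₁, h₂, p₁, p₂, n₁, n₂⟩ := hT.2.2 s hs
      exact ⟨t₁, t₂, ⟨h₁, Or.inl p₁⟩, ⟨h₂, Or.inl p₂⟩, hts.trans p₁, hts.trans p₂, n₁, n₂⟩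

/-- Every node of a perfect tree lies on a branch. -/
lemma IsPerfectTree.subset_of_branches_subset {T S : Set Str} (hT : IsPerfectTree T)
    (h : branches T ⊆ branches S) : T ⊆ S := by
  intro t ht
  obtain ⟨a, ha⟩ := (hT.tres ht).branches_nonempty
  rw [← seg_eq_of_mem_branches_tres ha]
  exact h (branches_mono (tres_subset T t) ha) t.length

lemma OpenIn.exists_forall_seg_eq_imp_mem {A B : Set Pt} (h : OpenIn A B) {a : Pt} (haA : a ∈ A)
    (haB : a ∈ B) : ∃ n, ∀ b ∈ B, seg b n = seg a n → b ∈ A := by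
  obtain ⟨V, hV, hVA⟩ := isOpen_induced_iff.mp h
  have haV : a ∈ V := (Set.ext_iff.1 hVA ⟨a, haB⟩).2 haA
  obtain ⟨-, ⟨x, n, rfl⟩, hax, hxV⟩ :=
    (PiNat.isTopologicalBasis_cylinders _).exists_subset_of_mem_open haV hV
  refine ⟨n, fun b hbB hb => (Set.ext_iff.1 hVA ⟨b, hbB⟩).1 (hxV ?_)⟩
  rw [← PiNat.mem_cylinder_iff_eq.1 hax, PiNat.mem_cylinder_iff]
  exact seg_eq_seg_iff.1 hb

lemma exists_tres_subset_of_openIn {T S : Set Str} (hT : IsPerfectTree T) {a : Pt}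
    (ha : a ∈ branches T ∩ branches S) (h : OpenIn (branches T ∩ branches S) (branches T)) :
    ∃ s ∈ T, Tres T s ⊆ S := by
  obtain ⟨n, hn⟩ := h.exists_forall_seg_eq_imp_mem ha ha.1
  refine ⟨seg a n, ha.1 n, (hT.tres (ha.1 n)).subset_of_branches_subset fun b hb => ?_⟩
  have hbn := seg_eq_of_mem_branches_tres hb
  rw [seg_length] at hbn
  exact (hn b (branches_mono (tres_subset T _) hb) hbn).2

lemma SqFin.exists_mem_branches {T : Set Str} {D : Set (Set Str)} (hT : IsPerfectTree T)
    (h : SqFin T D) : ∃ a ∈ branches T, ∃ S ∈ D, a ∈ branches S := by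
  obtain ⟨D', hD', -, hcov⟩ := h
  obtain ⟨a, ha⟩ := hT.branches_nonempty
  obtain ⟨S, hS, haS⟩ := Set.mem_iUnion₂.1 (hcov ha)
  exact ⟨a, ha, S, hD' hS, haS⟩

lemma RegularPTF.exists_subset_of_mem_branches {P : Set (Set Str)} (hP : IsPTF P)
    (hreg : RegularPTF P) {T S : Set Str} (hT : T ∈ P) (hS : S ∈ P) {a : Pt}
    (ha : a ∈ branches T ∩ branches S) : ∃ R ∈ P, R ⊆ T ∧ R ⊆ S := by
  rcases hreg T hT S hS with hcl | hcl
  · obtain ⟨s, hs, hsub⟩ := exists_tres_subset_of_openIn (hP.2.1 T hT) ha hcl.isOpen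
    exact ⟨Tres T s, hP.2.2 T hT s hs, tres_subset T s, hsub⟩
  · rw [Set.inter_comm] at hcl ha
    obtain ⟨s, hs, hsub⟩ := exists_tres_subset_of_openIn (hP.2.1 S hS) ha hcl.isOpen
    exact ⟨Tres S s, hP.2.2 S hS s hs, hsub, tres_subset S s⟩

lemma Locks.exists_subset_subset {P D Q : Set (Set Str)} (hQ : IsPTF Q) (hD : D ⊆ P)
    (h : Locks P D Q) {T : Set Str} (hT : T ∈ Q) : ∃ R ∈ Q, R ⊆ T ∧ ∃ S ∈ D, R ⊆ S := by
  obtain ⟨a, haT, S, hS, haS⟩ := (h.2 T hT).exists_mem_branches (hQ.2.1 T hT)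
  obtain ⟨s, hs, hsub⟩ := exists_tres_subset_of_openIn (hQ.2.1 T hT) ⟨haT, haS⟩
    (h.1.2.2 T hT S (hD hS)).1.isOpen
  exact ⟨Tres T s, hQ.2.2 T hT s hs, tres_subset T s, S, hS, hsub⟩

/-- Lemma 3.5 (pqm) (1): if `Q` locks `D` over `P` then `D` is pre-dense in
`P ∪ Q`, and also in `P` if `P` is regular. -/
theorem stmt15 (P Q : Set (Set Str)) (hP : IsPTF P) (hQ : IsPTF Q)
    (D : Set (Set Str)) (hD : D ⊆ P) (h : Locks P D Q) :
    PreDenseIn D (P ∪ Q) ∧ (RegularPTF P → PreDenseIn D P) := by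
  have below_Q : ∀ T ∈ Q, ∃ R ∈ {R ∈ P ∪ Q | ∃ S ∈ D, R ⊆ S}, R ⊆ T := fun T hT => by
    obtain ⟨R, hRQ, hRT, hRD⟩ := h.exists_subset_subset hQ hD hT
    exact ⟨R, ⟨Or.inr hRQ, hRD⟩, hRT⟩
  refine ⟨?_, fun hreg T hT => ?_⟩
  · rintro T (hTP | hTQ)
    · obtain ⟨T', hT'Q, hT'T⟩ := h.1.1 T hTP
      obtain ⟨R, hR, hRT'⟩ := below_Q T' hT'Q
      exact ⟨R, hR, hRT'.trans hT'T⟩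
    · exact below_Q T hTQ
  · obtain ⟨T', hT'Q, hT'T⟩ := h.1.1 T hT
    obtain ⟨a, haT', S, hS, haS⟩ := (h.2 T' hT'Q).exists_mem_branches (hQ.2.1 T' hT'Q)
    obtain ⟨R, hRP, hRT, hRS⟩ := hreg.exists_subset_of_mem_branches hP hT (hD hS)
      ⟨branches_mono hT'T haT', haS⟩
    exact ⟨R, ⟨hRP, S, hS, hRS⟩, hRT⟩

end
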